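/- Let B be a symmetric n×n matrix over 𝔽₂ and suppose B = L·D·Lᵀ = M·E·Mᵀ, where L and M are lower-triangular n×n matrices over 𝔽₂ with all diagonal entries equal to 1, and D and E are both symmetric block-diagonal matrices whose diagonal blocks are either 1×1 blocks or 2×2 blocks equal to [[0,1],[1,0]] (concretely: each of D, E is tridiagonal and symmetric, and whenever its off-diagonal entry at position (i,i+1) equals 1, its diagonal entries at positions (i,i) and (i+1,i+1) vanish and its off-diagonal entries at positions (i−1,i) and (i+1,i+2) vanish). Then D = E. -/

import Mathlib

/-!
If `L` is lower and `U` upper triangular with nonzero diagonal, then for lower sets of rows `P`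
and columns `Q` the `P × Q` block of `L * D * U` is `L[P,P] * D[P,Q] * U[Q,Q]`, so it has the
same rank as `D[P,Q]`. A matrix with at most one nonzero entry in each row and column (which the
block shape of `D` and `E` forces) has rank equal to its number of nonzero entries. Hence
`L * D * Lᵀ = M * E * Mᵀ` gives `D` and `E` the same number of nonzero entries in every
north-west rectangle, and inclusion–exclusion over the four rectangles with corner `(a, b)`
shows that `D a b ≠ 0 ↔ E a b ≠ 0`, which over `𝔽₂` means `D a b = E a b`.
-/

open Matrix

/-- `D` is block-diagonal with diagonal blocks that are either `1×1` or the
`2×2` block `[[0,1],[1,0]]`. -/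
def IsCanonBlockDiag {n : ℕ} (D : Matrix (Fin n) (Fin n) (ZMod 2)) : Prop :=
  D.IsSymm ∧
  (∀ i j : Fin n, (i.1 + 1 < j.1 ∨ j.1 + 1 < i.1) → D i j = 0) ∧
  (∀ i j : Fin n, i.1 + 1 = j.1 → D i j = 1 →
    D i i = 0 ∧ D j j = 0 ∧
    (∀ k : Fin n, k.1 + 1 = i.1 → D k i = 0) ∧
    (∀ k : Fin n, j.1 + 1 = k.1 → D j k = 0))

theorem Finset.filter_le_eq_insert_filter_lt {α : Type*} [Fintype α] [LinearOrder α]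
    (c : α) : Finset.univ.filter (· ≤ c) = insert c (Finset.univ.filter (· < c)) := by
  ext x
  simp [le_iff_lt_or_eq, or_comm]

namespace Matrix

section PartialMonomial

variable {m n R K : Type*}

structure IsPartialMonomial [Zero R] (A : Matrix m n R) : Prop where
  row_unique : ∀ {i j j'}, A i j ≠ 0 → A i j' ≠ 0 → j = j'
  col_unique : ∀ {i i' j}, A i j ≠ 0 → A i' j ≠ 0 → i = i'

theorem IsPartialMonomial.toBlock [Zero R] {A : Matrix m n R} (hA : A.IsPartialMonomial)
    (p : m → Prop) (q : n → Prop) : (A.toBlock p q).IsPartialMonomial where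
  row_unique h h' := Subtype.ext (hA.row_unique h h')
  col_unique h h' := Subtype.ext (hA.col_unique h h')

theorem IsPartialMonomial.sum_row_eq [Fintype n] [Zero R] {A : Matrix m n R}
    (hA : A.IsPartialMonomial) {i : m} {j : n} (hj : A i j ≠ 0) {M : Type*} [AddCommMonoid M]
    (f : R → M) (hf : f 0 = 0) : ∑ l, f (A i l) = f (A i j) :=
  Finset.sum_eq_single j (fun l _ hl => by rw [not_ne_iff.mp fun h => hl (hA.row_unique h hj), hf])
    (by simp)

theorem IsPartialMonomial.mul_transpose_eq_diagonal [Fintype n] [DecidableEq m]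
    [NonUnitalNonAssocSemiring R] {A : Matrix m n R} (hA : A.IsPartialMonomial) :
    A * Aᵀ = diagonal fun i => ∑ j, A i j * A i j := by
  ext i k
  rw [mul_apply, diagonal_apply]
  split_ifs with hik
  · rw [hik]; rfl
  · refine Finset.sum_eq_zero fun j _ => ?_
    by_contra hne
    exact hik (hA.col_unique (left_ne_zero_of_mul hne) (right_ne_zero_of_mul hne))

open Classical in
theorem IsPartialMonomial.rank_eq_card [Fintype m] [Fintype n] [DecidableEq m] [Field K]
    [DecidableEq K] {A : Matrix m n K} (hA : A.IsPartialMonomial) :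
    A.rank = Fintype.card {i // ∃ j, A i j ≠ 0} := by
  have hgram : ∀ i, ∑ j, A i j * A i j ≠ 0 ↔ ∃ j, A i j ≠ 0 := fun i => by
    refine ⟨fun hi => ?_, fun ⟨j, hj⟩ => ?_⟩
    · by_contra! hrow
      exact hi (by simp [hrow])
    · rw [hA.sum_row_eq hj (fun x => x * x) (zero_mul 0)]
      exact mul_ne_zero hj hj
  have hproj : diagonal (fun i => if ∃ j, A i j ≠ 0 then (1 : K) else 0) * A = A := by
    ext i j
    rw [diagonal_mul]
    split_ifs with hrow
    · exact one_mul _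
    · simp only [not_exists, not_not] at hrow
      rw [hrow j, mul_zero]
  -- `A * Aᵀ` and the projection onto the nonzero rows bound `rank A` from both sides.
  apply le_antisymm
  · calc A.rank ≤ (diagonal fun i => if ∃ j, A i j ≠ 0 then (1 : K) else 0).rank := by
          conv_lhs => rw [← hproj]
          exact rank_mul_le_left _ _
      _ = _ := by
          rw [rank_diagonal]
          exact Fintype.card_congr (Equiv.subtypeEquivRight fun i => by simp)
  · calc _ = (A * Aᵀ).rank := by
          rw [hA.mul_transpose_eq_diagonal, rank_diagonal]
          exact Fintype.card_congr (Equiv.subtypeEquivRight fun i => (hgram i).symm)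
      _ ≤ A.rank := rank_mul_le_left _ _

theorem IsPartialMonomial.rank_eq [Fintype m] [Fintype n] [DecidableEq m] [Field K]
    [DecidableEq K] {A : Matrix m n K} (hA : A.IsPartialMonomial) :
    A.rank = ∑ i, ∑ j, if A i j = 0 then 0 else 1 := by
  classical
  rw [hA.rank_eq_card, Fintype.card_subtype, Finset.card_filter]
  refine Finset.sum_congr rfl fun i _ => ?_
  split_ifs with hrow
  · obtain ⟨j, hj⟩ := hrow
    rw [hA.sum_row_eq hj (fun x : K => if x = 0 then (0 : ℕ) else 1) (if_pos rfl), if_neg hj]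
  · simp only [not_exists, not_not] at hrow
    simp [hrow]

def supportCount [Fintype m] [Fintype n] [Zero R] [DecidableEq R] (A : Matrix m n R)
    (p : m → Prop) (q : n → Prop) [DecidablePred p] [DecidablePred q] : ℕ :=
  ∑ i with p i, ∑ j with q j, if A i j = 0 then 0 else 1

theorem IsPartialMonomial.rank_toBlock [Fintype m] [Fintype n] [DecidableEq m] [Field K]
    [DecidableEq K] {A : Matrix m n K} (hA : A.IsPartialMonomial) (p : m → Prop) (q : n → Prop)
    [DecidablePred p] [DecidablePred q] :
    (A.toBlock p q).rank = A.supportCount p q := by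
  rw [(hA.toBlock p q).rank_eq, supportCount, Finset.sum_subtype _ (p := p) (by simp)]
  exact Finset.sum_congr rfl fun i _ => by rw [Finset.sum_subtype _ (p := q) (by simp)]; rfl

theorem supportCount_le_le_add_lt_lt [Fintype m] [LinearOrder m] [Fintype n] [LinearOrder n]
    [Zero R] [DecidableEq R] (A : Matrix m n R) (a : m) (b : n) :
    A.supportCount (· ≤ a) (· ≤ b) + A.supportCount (· < a) (· < b) =
      A.supportCount (· < a) (· ≤ b) + A.supportCount (· ≤ a) (· < b) +
        if A a b = 0 then 0 else 1 := by
  simp only [supportCount, Finset.filter_le_eq_insert_filter_lt,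
    Finset.sum_insert (by simp : a ∉ Finset.univ.filter (· < a)),
    Finset.sum_insert (by simp : b ∉ Finset.univ.filter (· < b)), Finset.sum_add_distrib]
  ring

end PartialMonomial

section Triangular

variable {ι κ K : Type*} [Fintype ι] [LinearOrder ι] [Field K]

theorem toBlock_mul_of_isLowerTriangular {L : Matrix ι ι K} (hL : L.IsLowerTriangular)
    (A : Matrix ι κ K) {p : ι → Prop} [DecidablePred p] (hp : IsLowerSet {x | p x})
    (q : κ → Prop) :
    (L * A).toBlock p q = L.toBlock p p * A.toBlock p q := by
  have hzero : L.toBlock p (fun y => ¬p y) = 0 := by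
    ext x y
    exact hL (lt_of_not_ge fun hyx => y.2 (hp hyx x.2))
  rw [toBlock_mul_eq_add p p, hzero, Matrix.zero_mul, add_zero]

theorem toBlock_mul_of_isUpperTriangular {U : Matrix ι ι K} (hU : U.IsUpperTriangular)
    (A : Matrix κ ι K) (p : κ → Prop) {q : ι → Prop} [DecidablePred q]
    (hq : IsLowerSet {x | q x}) :
    (A * U).toBlock p q = A.toBlock p q * U.toBlock q q := by
  have hzero : U.toBlock (fun y => ¬q y) q = 0 := by
    ext y x
    exact hU (lt_of_not_ge fun hyx => y.2 (hq hyx x.2))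
  rw [toBlock_mul_eq_add p q, hzero, Matrix.mul_zero, add_zero]

theorem rank_toBlock_mul_mul {L U : Matrix ι ι K} (hL : L.IsLowerTriangular)
    (hL₀ : ∀ i, L i i ≠ 0) (hU : U.IsUpperTriangular) (hU₀ : ∀ i, U i i ≠ 0)
    (A : Matrix ι ι K) {p q : ι → Prop} [DecidablePred p] [DecidablePred q]
    (hp : IsLowerSet {x | p x}) (hq : IsLowerSet {x | q x}) :
    ((L * A * U).toBlock p q).rank = (A.toBlock p q).rank := by
  have hUdet : IsUnit (U.toBlock q q).det := by
    rw [isUnit_iff_ne_zero, det_of_isUpperTriangular (hU.submatrix (f := Subtype.val))]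
    exact Finset.prod_ne_zero_iff.mpr fun i _ => hU₀ i
  rw [toBlock_mul_of_isUpperTriangular hU _ p hq, toBlock_mul_of_isLowerTriangular hL _ hp,
    rank_mul_eq_left_of_isUnit_det _ _ hUdet,
    rank_mul_eq_right_of_isLowerTriangular (L.toBlock p p) _ (hL.submatrix (f := Subtype.val))
      fun i => hL₀ i]

theorem IsPartialMonomial.eq_zero_iff_of_mul_mul_eq [DecidableEq K]
    {L U M V D E : Matrix ι ι K}
    (hL : L.IsLowerTriangular) (hL₀ : ∀ i, L i i ≠ 0)
    (hU : U.IsUpperTriangular) (hU₀ : ∀ i, U i i ≠ 0)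
    (hM : M.IsLowerTriangular) (hM₀ : ∀ i, M i i ≠ 0)
    (hV : V.IsUpperTriangular) (hV₀ : ∀ i, V i i ≠ 0)
    (hD : D.IsPartialMonomial) (hE : E.IsPartialMonomial) (h : L * D * U = M * E * V)
    (a b : ι) : D a b = 0 ↔ E a b = 0 := by
  have hcount : ∀ (p q : ι → Prop) [DecidablePred p] [DecidablePred q],
      IsLowerSet {x | p x} → IsLowerSet {x | q x} →
        D.supportCount p q = E.supportCount p q := by
    intro p q _ _ hp hq
    rw [← hD.rank_toBlock, ← hE.rank_toBlock,
      ← rank_toBlock_mul_mul hL hL₀ hU hU₀ D hp hq, h,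
      rank_toBlock_mul_mul hM hM₀ hV hV₀ E hp hq]
  have hDab := D.supportCount_le_le_add_lt_lt a b
  have hEab := E.supportCount_le_le_add_lt_lt a b
  rw [hcount (· ≤ a) (· ≤ b) (isLowerSet_Iic a) (isLowerSet_Iic b),
    hcount (· < a) (· < b) (isLowerSet_Iio a) (isLowerSet_Iio b),
    hcount (· < a) (· ≤ b) (isLowerSet_Iio a) (isLowerSet_Iic b),
    hcount (· ≤ a) (· < b) (isLowerSet_Iic a) (isLowerSet_Iio b)] at hDab
  split_ifs at hDab hEab <;> simp_all

end Triangular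

end Matrix

theorem ZMod.two_eq_of_eq_zero_iff {a b : ZMod 2} (h : a = 0 ↔ b = 0) : a = b := by
  revert a b; decide

theorem ZMod.two_eq_one_of_ne_zero {a : ZMod 2} (h : a ≠ 0) : a = 1 := by
  revert a; decide

namespace IsCanonBlockDiag

variable {n : ℕ} {D : Matrix (Fin n) (Fin n) (ZMod 2)}

theorem row_unique (hD : IsCanonBlockDiag D) {i j j' : Fin n} (hj : D i j ≠ 0)
    (hj' : D i j' ≠ 0) : j = j' := by
  have band : ∀ {k}, D i k ≠ 0 → k.1 ≤ i.1 + 1 ∧ i.1 ≤ k.1 + 1 := fun hk => by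
    by_contra hfar
    exact hk (hD.2.1 i _ (by omega))
  have block : ∀ {k l : Fin n}, k.1 + 1 = l.1 → D k l ≠ 0 → _ :=
    fun hkl hne => hD.2.2 _ _ hkl (ZMod.two_eq_one_of_ne_zero hne)
  have ordered : ∀ {k l : Fin n}, D i k ≠ 0 → D i l ≠ 0 → k < l → False := by
    intro k l hk hl hkl
    have hki : D k i ≠ 0 := by rwa [hD.1.apply]
    rw [Fin.lt_def] at hkl
    obtain ⟨hkb, hkb'⟩ := band hk
    obtain ⟨hlb, hlb'⟩ := band hl
    rcases (by omega : (k.1 + 1 = i.1 ∧ l = i) ∨ (k = i ∧ i.1 + 1 = l.1) ∨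
        (k.1 + 1 = i.1 ∧ i.1 + 1 = l.1)) with ⟨hki', rfl⟩ | ⟨rfl, hil⟩ | ⟨hki', hil⟩
    · exact hl (block hki' hki).2.1
    · exact hk (block hil hl).1
    · exact hl ((block hki' hki).2.2.2 l hil)
  rcases lt_trichotomy j j' with hlt | heq | hgt
  · exact (ordered hj hj' hlt).elim
  · exact heq
  · exact (ordered hj' hj hgt).elim

theorem isPartialMonomial (hD : IsCanonBlockDiag D) : D.IsPartialMonomial where
  row_unique := hD.row_unique
  col_unique h h' := hD.row_unique (by rwa [hD.1.apply]) (by rwa [hD.1.apply])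

end IsCanonBlockDiag

theorem stmt_11 (n : ℕ) (B L M D E : Matrix (Fin n) (Fin n) (ZMod 2))
    (hL : ∀ i j : Fin n, i < j → L i j = 0) (hL1 : ∀ i : Fin n, L i i = 1)
    (hM : ∀ i j : Fin n, i < j → M i j = 0) (hM1 : ∀ i : Fin n, M i i = 1)
    (hD : IsCanonBlockDiag D) (hE : IsCanonBlockDiag E)
    (h1 : B = L * D * Lᵀ) (h2 : B = M * E * Mᵀ) :
    D = E := by
  ext a b
  refine ZMod.two_eq_of_eq_zero_iff <| hD.isPartialMonomial.eq_zero_iff_of_mul_mul_eq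
    (fun i j => hL i j) (by simp [hL1]) (fun i j => hL j i) (by simp [hL1])
    (fun i j => hM i j) (by simp [hM1]) (fun i j => hM j i) (by simp [hM1])
    hE.isPartialMonomial (h1.symm.trans h2) a b
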